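/- arXiv:1808.05320 — 4 statements merged into one kernel-verified Lean document; each statement's English description precedes it below -/
import Mathlib

section
/- If A is symmetric with respect to the M_f inner product (i.e., M_f A is a symmetric matrix), then the coarsened operator C(A) = R A I is symmetric with respect to the M_c inner product (i.e., M_c C(A) is symmetric). -/
open Matrix

theorem Matrix.IsSymm.transpose_mul_mul_same {m n α : Type*} [Fintype n] [CommSemiring α]
    {A : Matrix n n α} (hA : A.IsSymm) (B : Matrix n m α) : (Bᵀ * A * B).IsSymm := by
  simp only [IsSymm, transpose_mul, transpose_transpose, hA.eq, Matrix.mul_assoc]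

/-- If `A` is symmetric with respect to the `M_f` inner product, then the coarsened
operator `C(A) = R A I` is symmetric with respect to the `M_c` inner product. -/
theorem coarsened_operator_symm {nc nf : ℕ}
    (Mf : Matrix (Fin nf) (Fin nf) ℝ) (hMf : Mf.PosDef)
    (I : Matrix (Fin nf) (Fin nc) ℝ) (hI : Function.Injective I.mulVec)
    (A : Matrix (Fin nf) (Fin nf) ℝ) (hA : (Mf * A).IsSymm) :
    ((Iᵀ * Mf * I) * (((Iᵀ * Mf * I)⁻¹ * Iᵀ * Mf) * A * I)).IsSymm := by
  have hMc : (Iᵀ * Mf * I).PosDef := by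
    simpa only [conjTranspose_eq_transpose_of_trivial] using hMf.conjTranspose_mul_mul_same hI
  have hcancel : (Iᵀ * Mf * I) * (((Iᵀ * Mf * I)⁻¹ * Iᵀ * Mf) * A * I) = Iᵀ * (Mf * A) * I := by
    rw [show (Iᵀ * Mf * I)⁻¹ * Iᵀ * Mf * A * I = (Iᵀ * Mf * I)⁻¹ * (Iᵀ * (Mf * A) * I) by
      simp only [Matrix.mul_assoc]]
    exact mul_nonsing_inv_cancel_left _ _ ((isUnit_iff_isUnit_det _).mp hMc.isUnit)
  rw [hcancel]
  exact hA.transpose_mul_mul_same I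
end

section
/- If A is positive semidefinite with respect to the M_f inner product (i.e., xᵀ M_f A x ≥ 0 for all x), then C(A) = R A I is positive semidefinite with respect to the M_c inner product. -/
/-! Since `M_c R = Iᵀ M_f`, the `M_c`-form of `C(A)` at `u` is the `M_f`-form of `A` at `I u`. -/

open Matrix

theorem Matrix.dotProduct_mulVec_transpose_mul_mul {R m n : Type*} [CommSemiring R]
    [Fintype m] [Fintype n] (A : Matrix n n R) (B : Matrix n m R) (u : m → R) :
    u ⬝ᵥ (Bᵀ * A * B) *ᵥ u = (B *ᵥ u) ⬝ᵥ A *ᵥ (B *ᵥ u) := by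
  rw [← mulVec_mulVec, ← mulVec_mulVec, dotProduct_mulVec, vecMul_transpose]

/-- If `A` is positive semidefinite with respect to the `M_f` inner product, then
`C(A) = R A I` is positive semidefinite with respect to the `M_c` inner product. -/
theorem coarsened_operator_posSemidef {nc nf : ℕ}
    (Mf : Matrix (Fin nf) (Fin nf) ℝ) (hMf : Mf.PosDef)
    (I : Matrix (Fin nf) (Fin nc) ℝ) (hI : Function.Injective I.mulVec)
    (A : Matrix (Fin nf) (Fin nf) ℝ)
    (hA : ∀ x : Fin nf → ℝ, 0 ≤ x ⬝ᵥ ((Mf * A).mulVec x)) :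
    ∀ u : Fin nc → ℝ,
      0 ≤ u ⬝ᵥ (((Iᵀ * Mf * I) * (((Iᵀ * Mf * I)⁻¹ * Iᵀ * Mf) * A * I)).mulVec u) := by
  intro u
  set Mc := Iᵀ * Mf * I
  have hMc_det : IsUnit Mc.det := by
    have hMc_posDef : Mc.PosDef := by simpa using hMf.conjTranspose_mul_mul_same hI
    exact (isUnit_iff_isUnit_det _).mp hMc_posDef.isUnit
  have hMc_mul_coarsened : Mc * ((Mc⁻¹ * Iᵀ * Mf) * A * I) = Iᵀ * (Mf * A) * I := by
    rw [show (Mc⁻¹ * Iᵀ * Mf) * A * I = Mc⁻¹ * (Iᵀ * (Mf * A) * I) by simp only [Matrix.mul_assoc],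
      mul_nonsing_inv_cancel_left _ _ hMc_det]
  rw [hMc_mul_coarsened, dotProduct_mulVec_transpose_mul_mul]
  exact hA (I *ᵥ u)
end

section
/- Coarsening of the discrete divergence is compatible with coarsening of the discrete gradient: if D_f = −M_f⁻¹ G_fᵀ M_f and G_c := C(G_f) = R_u G_f I_u (with appropriate interpolation/restriction on scalar and vector spaces), then C(D_f) = −M_c⁻¹ G_cᵀ M_c, i.e., the coarsened divergence is the negative M_c-adjoint of the coarsened gradient. -/
open Matrix

lemma aux_posdef {m n : ℕ} {M : Matrix (Fin m) (Fin m) ℝ} (hM : M.PosDef)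
    {I : Matrix (Fin m) (Fin n) ℝ} (hI : Function.Injective I.mulVec) :
    (Iᵀ * M * I).PosDef := by
  have hconj : (Iᵀ * M * I) = (Iᴴ * M * I) :=
    (conjTranspose_eq_transpose_of_trivial I).symm ▸ rfl
  refine posDef_iff_dotProduct_mulVec.mpr ⟨?_, ?_⟩
  · rw [hconj]; exact isHermitian_conjTranspose_mul_mul I hM.1
  · intro x hx
    have hIx : I *ᵥ x ≠ 0 := fun h => hx (hI (by simpa using h))
    have := hM.dotProduct_mulVec_pos hIx
    simpa only [star_mulVec, dotProduct_mulVec, vecMul_vecMul, hconj] using this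

/-- The coarsened divergence is the negative `M_c`-adjoint of the coarsened gradient:
if `D_f = −(M_f^u)⁻¹ G_fᵀ M_f^q` and `G_c = R_q G_f I_u`, then
`C(D_f) = R_u D_f I_q = −(M_c^u)⁻¹ G_cᵀ M_c^q`. -/
theorem coarsened_divergence_is_adjoint {nc nf mc mf : ℕ}
    (Mfu : Matrix (Fin nf) (Fin nf) ℝ) (hMfu : Mfu.PosDef)
    (Mfq : Matrix (Fin mf) (Fin mf) ℝ) (hMfq : Mfq.PosDef)
    (Iu : Matrix (Fin nf) (Fin nc) ℝ) (hIu : Function.Injective Iu.mulVec)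
    (Iq : Matrix (Fin mf) (Fin mc) ℝ) (hIq : Function.Injective Iq.mulVec)
    (Gf : Matrix (Fin mf) (Fin nf) ℝ) :
    (((Iuᵀ * Mfu * Iu)⁻¹ * Iuᵀ * Mfu)) * (-(Mfu⁻¹ * Gfᵀ * Mfq)) * Iq =
      -((Iuᵀ * Mfu * Iu)⁻¹ *
          ((((Iqᵀ * Mfq * Iq)⁻¹ * Iqᵀ * Mfq) * Gf * Iu))ᵀ * (Iqᵀ * Mfq * Iq)) := by
  have hBpd : (Iqᵀ * Mfq * Iq).PosDef := aux_posdef hMfq hIq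
  have hBdet : IsUnit (Iqᵀ * Mfq * Iq).det := isUnit_iff_ne_zero.mpr hBpd.det_pos.ne'
  have hB : (Iqᵀ * Mfq * Iq)⁻¹ * (Iqᵀ * Mfq * Iq) = 1 := nonsing_inv_mul _ hBdet
  have hMfuinv : Mfu * Mfu⁻¹ = 1 :=
    mul_nonsing_inv _ (isUnit_iff_ne_zero.mpr hMfu.det_pos.ne')
  have hsymMfq : Mfqᵀ = Mfq := by
    rw [← conjTranspose_eq_transpose_of_trivial]; exact hMfq.1
  have hBsym : (Iqᵀ * Mfq * Iq)ᵀ = Iqᵀ * Mfq * Iq := by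
    rw [← conjTranspose_eq_transpose_of_trivial]; exact hBpd.1
  rw [Matrix.mul_neg, Matrix.neg_mul]
  congr 1
  simp only [transpose_mul, transpose_transpose, transpose_nonsing_inv, hsymMfq, hBsym,
    Matrix.mul_assoc]
  have hB' : (Iqᵀ * (Mfq * Iq))⁻¹ * (Iqᵀ * (Mfq * Iq)) = 1 := by
    simpa [Matrix.mul_assoc] using hB
  rw [← Matrix.mul_assoc Mfu Mfu⁻¹, hMfuinv, Matrix.one_mul, hB', Matrix.mul_one]
end

section
/- If a fine bilinear form a_f satisfies the inherited-form identity a_c(u_c, v_c) = a_f(I u_c, I v_c) for a coarse bilinear form a_c, and both forms are represented by matrices via a_f(u,v) = uᵀ M_f A_f v and a_c(u,v) = uᵀ M_c A_c v with M_c = Iᵀ M_f I invertible, then A_c = R A_f I where R = M_c⁻¹ Iᵀ M_f. (Geometric rediscretization of SIP equals Galerkin coarsening.) -/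
/-!
Both sides of the inherited-form identity are bilinear forms in `(u, v)`, with matrices
`M_c A_c` and `Iᵀ (M_f A_f) I`, so the identity says `M_c A_c = Iᵀ M_f A_f I`. Since `M_f` is
positive definite and `I` is injective, `M_c = Iᵀ M_f I` is positive definite, hence
invertible, and multiplying by `M_c⁻¹` gives `A_c = M_c⁻¹ Iᵀ M_f A_f I`.
-/

open Matrix

namespace Matrix

variable {m n R : Type*} [Fintype m] [Fintype n]

theorem ext_of_dotProduct_mulVec [CommSemiring R] {A B : Matrix m n R}
    (h : ∀ u v, u ⬝ᵥ (A *ᵥ v) = u ⬝ᵥ (B *ᵥ v)) : A = B :=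
  ext_iff_mulVec.2 fun v => dotProduct_eq _ _ fun u => by
    rw [dotProduct_comm, h, dotProduct_comm]

theorem dotProduct_transpose_mul_mul_mulVec [CommSemiring R] (I : Matrix n m R)
    (B : Matrix n n R) (u v : m → R) :
    u ⬝ᵥ ((Iᵀ * B * I) *ᵥ v) = (I *ᵥ u) ⬝ᵥ (B *ᵥ (I *ᵥ v)) := by
  rw [Matrix.mul_assoc, ← mulVec_mulVec, dotProduct_mulVec, vecMul_transpose, mulVec_mulVec]

theorem eq_galerkin_coarsening_of_isUnit [Field R] [DecidableEq m]
    {M A : Matrix n n R} {I : Matrix n m R} {Ac : Matrix m m R} (hMc : IsUnit (Iᵀ * M * I))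
    (hform : ∀ u v, u ⬝ᵥ ((Iᵀ * M * I * Ac) *ᵥ v) = (I *ᵥ u) ⬝ᵥ ((M * A) *ᵥ (I *ᵥ v))) :
    Ac = (Iᵀ * M * I)⁻¹ * Iᵀ * M * A * I := by
  have hmat : Iᵀ * M * I * Ac = Iᵀ * (M * A) * I :=
    ext_of_dotProduct_mulVec fun u v => by rw [hform, dotProduct_transpose_mul_mul_mulVec]
  calc Ac = (Iᵀ * M * I)⁻¹ * (Iᵀ * M * I * Ac) :=
        (nonsing_inv_mul_cancel_left _ _ ((isUnit_iff_isUnit_det _).1 hMc)).symm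
    _ = (Iᵀ * M * I)⁻¹ * Iᵀ * M * A * I := by rw [hmat]; simp only [Matrix.mul_assoc]

end Matrix

/-- If a coarse bilinear form is inherited from the fine one,
`uᵀ M_c A_c v = (Iu)ᵀ M_f A_f (Iv)` for all `u, v`, with `M_c = Iᵀ M_f I`, then
`A_c = R A_f I` where `R = M_c⁻¹ Iᵀ M_f`: geometric rediscretization equals Galerkin
coarsening. -/
theorem inherited_form_eq_galerkin_coarsening {nc nf : ℕ}
    (Mf : Matrix (Fin nf) (Fin nf) ℝ) (hMf : Mf.PosDef)
    (I : Matrix (Fin nf) (Fin nc) ℝ) (hI : Function.Injective I.mulVec)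
    (Af : Matrix (Fin nf) (Fin nf) ℝ) (Ac : Matrix (Fin nc) (Fin nc) ℝ)
    (hform : ∀ u v : Fin nc → ℝ,
      u ⬝ᵥ (((Iᵀ * Mf * I) * Ac).mulVec v) =
        (I.mulVec u) ⬝ᵥ ((Mf * Af).mulVec (I.mulVec v))) :
    Ac = ((Iᵀ * Mf * I)⁻¹ * Iᵀ * Mf) * Af * I := by
  have hMc : (Iᵀ * Mf * I).PosDef := by
    simpa only [conjTranspose_eq_transpose_of_trivial] using hMf.conjTranspose_mul_mul_same hI
  exact eq_galerkin_coarsening_of_isUnit hMc.isUnit hform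
end
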